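/- arXiv:1301.4951 — 7 statements merged into one kernel-verified Lean document; each statement's English description precedes it below -/
import Mathlib

section
/- Let A be an invertible n×n real matrix, let ξ ∈ ℝⁿ satisfy Aᵀ A ξ = λ ξ, and let η ∈ ℝⁿ satisfy (A⁻¹)ᵀ A⁻¹ η = μ η. If λ μ ≠ 1, then ⟨ξ, A⁻¹ η⟩ = 0, i.e., the vector ξ is orthogonal to the pullback A⁻¹ η of η under the backward flow gradient. -/
open Matrix

/-- If `ξ` is an eigenvector of the forward Cauchy–Green tensor `Aᵀ * A` with eigenvalue `lam`,
`η` is an eigenvector of the backward Cauchy–Green tensor `(A⁻¹)ᵀ * A⁻¹` with eigenvalue `μ`,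
and `lam * μ ≠ 1`, then `ξ` is orthogonal to the pullback `A⁻¹ η`. -/
theorem eigenvector_orthogonal_pullback
    (n : ℕ) (A : Matrix (Fin n) (Fin n) ℝ) (hA : IsUnit A.det)
    (ξ η : Fin n → ℝ) (lam μ : ℝ)
    (hξ : (Aᵀ * A).mulVec ξ = lam • ξ)
    (hη : ((A⁻¹)ᵀ * A⁻¹).mulVec η = μ • η)
    (h : lam * μ ≠ 1) :
    ξ ⬝ᵥ A⁻¹.mulVec η = 0 := by
  set x := ξ ⬝ᵥ A⁻¹.mulVec η with hx
  have hBA : A⁻¹ * A = 1 := nonsing_inv_mul A hA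
  have hAB : A * A⁻¹ = 1 := mul_nonsing_inv A hA
  have key : lam * μ * x = x := by
    have h1 : lam * μ * x = (lam • ξ) ⬝ᵥ A⁻¹.mulVec (μ • η) := by
      rw [smul_dotProduct, mulVec_smul, dotProduct_smul, smul_eq_mul, smul_eq_mul, hx]
      ring
    rw [← hξ, ← hη, mulVec_mulVec, dotProduct_mulVec, ← mulVec_transpose,
      mulVec_mulVec] at h1
    have hT : A⁻¹ᵀ = Aᵀ⁻¹ := transpose_nonsing_inv A
    have hAT : IsUnit Aᵀ.det := by simpa [det_transpose] using hA
    have h2 : (A⁻¹ * (A⁻¹ᵀ * A⁻¹))ᵀ * (Aᵀ * A) = A⁻¹ᵀ := by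
      simp only [transpose_mul, transpose_transpose]
      simp only [hT]
      calc Aᵀ⁻¹ * A⁻¹ * Aᵀ⁻¹ * (Aᵀ * A)
          = Aᵀ⁻¹ * (A⁻¹ * ((Aᵀ⁻¹ * Aᵀ) * A)) := by
            simp only [Matrix.mul_assoc]
        _ = Aᵀ⁻¹ := by rw [nonsing_inv_mul _ hAT, one_mul, hBA, mul_one]
    rw [h2, mulVec_transpose, ← dotProduct_mulVec, ← hx] at h1
    exact h1
  have : (lam * μ - 1) * x = 0 := by linarith
  rcases mul_eq_zero.1 this with h' | h'
  · exact absurd (by linarith : lam * μ = 1) h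
  · exact h'
end

section
/- Let A be an invertible n×n real matrix, let ξ ∈ ℝⁿ satisfy Aᵀ A ξ = λ ξ, and let η ∈ ℝⁿ satisfy (A⁻¹)ᵀ A⁻¹ η = μ η. Then ⟨η, A ξ⟩ = μ λ ⟨η, A ξ⟩; consequently, if λ μ ≠ 1, then ⟨η, A ξ⟩ = 0, i.e., η is orthogonal to the pushforward A ξ of ξ under the forward flow gradient. -/
open Matrix

/-- If `ξ` is an eigenvector of the forward Cauchy–Green tensor `Aᵀ * A` with eigenvalue `lam`
and `η` is an eigenvector of the backward Cauchy–Green tensor `(A⁻¹)ᵀ * A⁻¹` with eigenvalue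
`μ`, then `⟨η, A ξ⟩ = μ * lam * ⟨η, A ξ⟩`; consequently if `lam * μ ≠ 1` then `η` is
orthogonal to the pushforward `A ξ`. -/
theorem inner_eigenvector_pushforward_scaling
    (n : ℕ) (A : Matrix (Fin n) (Fin n) ℝ) (hA : IsUnit A.det)
    (ξ η : Fin n → ℝ) (lam μ : ℝ)
    (hξ : (Aᵀ * A).mulVec ξ = lam • ξ)
    (hη : ((A⁻¹)ᵀ * A⁻¹).mulVec η = μ • η) :
    η ⬝ᵥ A.mulVec ξ = μ * lam * (η ⬝ᵥ A.mulVec ξ) ∧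
      (lam * μ ≠ 1 → η ⬝ᵥ A.mulVec ξ = 0) := by
  have hinv : A⁻¹ * A = 1 := Matrix.nonsing_inv_mul A hA
  have key : μ * lam * (η ⬝ᵥ A.mulVec ξ) = η ⬝ᵥ A.mulVec ξ := by
    calc μ * lam * (η ⬝ᵥ A.mulVec ξ)
        = (μ • η) ⬝ᵥ A.mulVec (lam • ξ) := by
          rw [Matrix.mulVec_smul, smul_dotProduct, dotProduct_smul,
            smul_eq_mul, smul_eq_mul]; ring
      _ = (((A⁻¹)ᵀ * A⁻¹).mulVec η) ⬝ᵥ A.mulVec ((Aᵀ * A).mulVec ξ) := by rw [hη, hξ]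
      _ = η ⬝ᵥ A.mulVec ξ := by
          have tdot : ∀ (M : Matrix (Fin n) (Fin n) ℝ) (v w : Fin n → ℝ),
              (Mᵀ.mulVec v) ⬝ᵥ w = v ⬝ᵥ (M.mulVec w) := fun M v w => by
            rw [Matrix.mulVec_transpose, ← Matrix.dotProduct_mulVec]
          have hM : A⁻¹ * (A * Aᵀ * A) = Aᵀ * A := by
            rw [Matrix.mul_assoc A Aᵀ A, ← Matrix.mul_assoc A⁻¹ A, hinv, Matrix.one_mul]
          rw [← Matrix.mulVec_mulVec η A⁻¹ᵀ A⁻¹, tdot, Matrix.mulVec_mulVec _ A _,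
            ← Matrix.mul_assoc, Matrix.mulVec_mulVec, hM,
            ← Matrix.mulVec_mulVec ξ Aᵀ A, ← tdot,
            Matrix.mulVec_mulVec, Matrix.transpose_transpose,
            Matrix.mul_nonsing_inv A hA, Matrix.one_mulVec]
  refine ⟨key.symm, fun h => ?_⟩
  have : (1 - μ * lam) * (η ⬝ᵥ A.mulVec ξ) = 0 := by linarith [key]
  rcases mul_eq_zero.mp this with h1 | h2
  · exact absurd (by linarith [h1] : lam * μ = 1) h
  · exact h2
end

section
/- Let A be an invertible n×n real matrix and let ξ ∈ ℝⁿ be a nonzero eigenvector of the forward Cauchy–Green tensor C^f = Aᵀ A corresponding to its largest eigenvalue λ_max. Then there exists a nonzero eigenvector η of the backward Cauchy–Green tensor C^b = (A⁻¹)ᵀ A⁻¹ corresponding to its smallest eigenvalue such that A((span ξ)^⊥) = (span η)^⊥. (Pointwise tangent-space version of Theorem 1(i): a forward strain-surface is a backward stretch-surface.) -/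
/-!
Take `η = A ξ`. The backward tensor `(A⁻¹)ᵀ A⁻¹` is conjugate (by `A`) to `(Aᵀ A)⁻¹`, so its
spectrum consists of the reciprocals of the positive eigenvalues of `Aᵀ A`; its least element is
`lmax⁻¹`, and it maps `A ξ` to `lmax⁻¹ • A ξ`. The tangent spaces match because
`⟪A v, A ξ⟫ = ⟪v, Aᵀ A ξ⟫ = lmax ⟪v, ξ⟫`, so `A v ⊥ η` exactly when `v ⊥ ξ`.
-/

open Matrix

open scoped InnerProductSpace ComplexOrder

theorem IsGreatest.isLeast_inv {α : Type*} [Field α] [LinearOrder α] [IsStrictOrderedRing α]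
    {s : Set α} {a : α} (h : IsGreatest s a) (hs : ∀ x ∈ s, 0 < x) : IsLeast s⁻¹ a⁻¹ := by
  refine ⟨by simpa using h.1, fun x hx => ?_⟩
  have hx' : x⁻¹ ∈ s := hx
  simpa using inv_anti₀ (hs _ hx') (h.2 hx')

theorem spectrum_mul_comm_of_isUnit {R A : Type*} [CommSemiring R] [Ring A] [Algebra R A]
    {a : A} (ha : IsUnit a) (b : A) : spectrum R (a * b) = spectrum R (b * a) := by
  obtain ⟨u, rfl⟩ := ha
  simpa [mul_assoc] using spectrum.units_conjugate (R := R) (a := b * u) (u := u)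

theorem Submodule.map_orthogonal_span_singleton {𝕜 E : Type*} [RCLike 𝕜] [NormedAddCommGroup E]
    [InnerProductSpace 𝕜 E] {T : E →ₗ[𝕜] E} (hT : Function.Surjective T) {ξ : E} {c : 𝕜}
    (hc : c ≠ 0) (h : ∀ v, ⟪T v, T ξ⟫_𝕜 = c * ⟪v, ξ⟫_𝕜) :
    (𝕜 ∙ ξ)ᗮ.map T = (𝕜 ∙ T ξ)ᗮ := by
  ext w
  obtain ⟨v, rfl⟩ := hT w
  simp only [mem_map, mem_orthogonal_singleton_iff_inner_left]
  constructor
  · rintro ⟨u, hu, huv⟩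
    rw [← huv, h, hu, mul_zero]
  · intro hv
    exact ⟨v, by simpa [h, hc] using hv, rfl⟩

namespace Matrix

variable {n : Type*} [Fintype n] [DecidableEq n]

theorem spectrum_nonsing_inv {K : Type*} [Field K] {M : Matrix n n K} (hM : IsUnit M.det) :
    spectrum K M⁻¹ = (spectrum K M)⁻¹ := by
  have hM' : IsUnit M := (isUnit_iff_isUnit_det M).mpr hM
  rw [← hM'.unit_spec, ← coe_units_inv, spectrum.map_inv]

theorem spectrum_transpose_nonsing_inv_mul_nonsing_inv {K : Type*} [Field K]
    {A : Matrix n n K} (hA : IsUnit A.det) :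
    spectrum K (A⁻¹ᵀ * A⁻¹) = (spectrum K (Aᵀ * A))⁻¹ := by
  have hAA : IsUnit (Aᵀ * A).det := by simpa using hA.mul hA
  rw [← spectrum_nonsing_inv hAA, Matrix.mul_inv_rev, transpose_nonsing_inv,
    spectrum_mul_comm_of_isUnit ((isUnit_iff_isUnit_det _).mpr (isUnit_nonsing_inv_det A hA))]

theorem spectrum_conjTranspose_mul_self_pos {𝕜 : Type*} [RCLike 𝕜] {A : Matrix n n 𝕜}
    (hA : IsUnit A.det) : ∀ μ ∈ spectrum ℝ (Aᴴ * A), 0 < μ := by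
  have hposDef := PosDef.conjTranspose_mul_self A
    (mulVec_injective_iff_isUnit.mpr ((isUnit_iff_isUnit_det A).mpr hA))
  rintro μ hμ
  obtain ⟨i, rfl⟩ := hposDef.1.spectrum_real_eq_range_eigenvalues ▸ hμ
  exact hposDef.eigenvalues_pos i

theorem transpose_nonsing_inv_mul_nonsing_inv_mulVec {K : Type*} [Field K] {A : Matrix n n K}
    (hA : IsUnit A.det) {c : K} (hc : c ≠ 0) {x : n → K} (hx : (Aᵀ * A) *ᵥ x = c • x) :
    (A⁻¹ᵀ * A⁻¹) *ᵥ (A *ᵥ x) = c⁻¹ • A *ᵥ x := by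
  have hAx : A *ᵥ x = c • Aᵀ⁻¹ *ᵥ x := by
    rw [← mulVec_smul, ← hx, mulVec_mulVec, ← Matrix.mul_assoc,
      nonsing_inv_mul _ (by rwa [det_transpose]), Matrix.one_mul]
  rw [mulVec_mulVec, Matrix.mul_assoc, nonsing_inv_mul _ hA, Matrix.mul_one,
    transpose_nonsing_inv, hAx, smul_smul, inv_mul_cancel₀ hc, one_smul]

theorem bijective_toEuclideanLin {𝕜 : Type*} [RCLike 𝕜] {A : Matrix n n 𝕜}
    (hA : IsUnit A.det) : Function.Bijective (toEuclideanLin A) :=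
  (Module.End.isUnit_iff _).mp (((isUnit_iff_isUnit_det A).mpr hA).map (toLpLinAlgEquiv 2))

theorem inner_toEuclideanLin_toEuclideanLin {𝕜 : Type*} [RCLike 𝕜] (A : Matrix n n 𝕜)
    (v w : EuclideanSpace 𝕜 n) :
    ⟪toEuclideanLin A v, toEuclideanLin A w⟫_𝕜 = ⟪v, toEuclideanLin (Aᴴ * A) w⟫_𝕜 := by
  rw [toLpLin_mul_same, toEuclideanLin_conjTranspose_eq_adjoint, LinearMap.comp_apply,
    LinearMap.adjoint_inner_right]

end Matrix

/-- Pointwise tangent-space version of Theorem 1(i): if `ξ ≠ 0` is an eigenvector of the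
forward Cauchy–Green tensor `Cᶠ = Aᵀ * A` for its largest eigenvalue `lmax`, then there is a
nonzero eigenvector `η` of the backward Cauchy–Green tensor `Cᵇ = (A⁻¹)ᵀ * A⁻¹` for its
smallest eigenvalue such that `A ((span ξ)ᗮ) = (span η)ᗮ`. -/
theorem forward_strain_surface_is_backward_stretch_surface
    (n : ℕ) (A : Matrix (Fin n) (Fin n) ℝ) (hA : IsUnit A.det)
    (lmax : ℝ) (hmax : IsGreatest (spectrum ℝ (Aᵀ * A)) lmax)
    (ξ : EuclideanSpace ℝ (Fin n)) (hξ0 : ξ ≠ 0)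
    (hξ : Matrix.toEuclideanLin (Aᵀ * A) ξ = lmax • ξ) :
    ∃ (lmin : ℝ) (η : EuclideanSpace ℝ (Fin n)),
      IsLeast (spectrum ℝ ((A⁻¹)ᵀ * A⁻¹)) lmin ∧ η ≠ 0 ∧
      Matrix.toEuclideanLin ((A⁻¹)ᵀ * A⁻¹) η = lmin • η ∧
      Submodule.map (Matrix.toEuclideanLin A) ((ℝ ∙ ξ)ᗮ) = (ℝ ∙ η)ᗮ := by
  have hpos : ∀ μ ∈ spectrum ℝ (Aᵀ * A), 0 < μ := spectrum_conjTranspose_mul_self_pos hA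
  have hlmax : lmax ≠ 0 := (hpos lmax hmax.1).ne'
  have hbij := bijective_toEuclideanLin hA
  refine ⟨lmax⁻¹, toEuclideanLin A ξ, ?_, (map_ne_zero_iff _ hbij.1).mpr hξ0, ?_, ?_⟩
  · rw [spectrum_transpose_nonsing_inv_mul_nonsing_inv hA]
    exact hmax.isLeast_inv hpos
  · have hx := congrArg WithLp.ofLp hξ
    apply WithLp.ofLp_injective
    simp only [ofLp_toLpLin, WithLp.ofLp_smul] at hx ⊢
    exact transpose_nonsing_inv_mul_nonsing_inv_mulVec hA hlmax hx
  · refine Submodule.map_orthogonal_span_singleton hbij.2 hlmax fun v => ?_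
    rw [inner_toEuclideanLin_toEuclideanLin, conjTranspose_eq_transpose_of_trivial, hξ,
      inner_smul_right]
end

section
/- Let A be an invertible n×n real matrix and let ξ ∈ ℝⁿ be a nonzero eigenvector of the forward Cauchy–Green tensor C^f = Aᵀ A corresponding to its smallest eigenvalue λ_min. Then there exists a nonzero eigenvector η of the backward Cauchy–Green tensor C^b = (A⁻¹)ᵀ A⁻¹ corresponding to its largest eigenvalue such that A((span ξ)^⊥) = (span η)^⊥. (Pointwise tangent-space version of Theorem 1(ii): a forward stretch-surface is a backward strain-surface.) -/
/-!
Write `T` for the flow gradient and `Cᶠ = T* T`, `Cᵇ = (T⁻¹)* T⁻¹`. If `Cᶠ ξ = λ ξ` with `ξ ≠ 0`,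
then `λ > 0` and, since `(T⁻¹)* T* = 1`, applying `(T⁻¹)*` gives `(T⁻¹)* ξ = λ⁻¹ T ξ`. Hence
`Cᵇ (T ξ) = (T⁻¹)* ξ = λ⁻¹ T ξ`: eigenpairs of `Cᶠ` and `Cᵇ` correspond by `(λ, ξ) ↦ (λ⁻¹, T ξ)`,
and inverting positive eigenvalues sends the least to the greatest. Finally
`T (ξᗮ) = (T⁻¹)⁻¹(ξᗮ) = ((T⁻¹)* ξ)ᗮ = (T ξ)ᗮ`.
-/

open Matrix LinearMap Module.End

theorem Submodule.comap_orthogonal_span_singleton {𝕜 E F : Type*} [RCLike 𝕜]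
    [NormedAddCommGroup E] [InnerProductSpace 𝕜 E] [FiniteDimensional 𝕜 E]
    [NormedAddCommGroup F] [InnerProductSpace 𝕜 F] [FiniteDimensional 𝕜 F]
    (S : E →ₗ[𝕜] F) (y : F) : (𝕜 ∙ y)ᗮ.comap S = (𝕜 ∙ adjoint S y)ᗮ := by
  ext x
  simp only [Submodule.mem_comap, Submodule.mem_orthogonal_singleton_iff_inner_right,
    adjoint_inner_left]

section CauchyGreen

variable {E F : Type*} [NormedAddCommGroup E] [InnerProductSpace ℝ E] [FiniteDimensional ℝ E]
  [NormedAddCommGroup F] [InnerProductSpace ℝ F] [FiniteDimensional ℝ F]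

/-- The paper's `Cᶠ`; its `Cᵇ` is `cauchyGreen T.symm`. -/
noncomputable def cauchyGreen (T : E →ₗ[ℝ] F) : Module.End ℝ E := adjoint T ∘ₗ T

theorem inner_cauchyGreen_apply (T : E →ₗ[ℝ] F) (x : E) :
    inner ℝ x (cauchyGreen T x) = ‖T x‖ ^ 2 := by
  rw [cauchyGreen, LinearMap.comp_apply, adjoint_inner_right, real_inner_self_eq_norm_sq]

theorem Module.End.HasEigenvector.pos_of_cauchyGreen {T : E →ₗ[ℝ] F}
    (hT : Function.Injective T) {μ : ℝ} {x : E} (h : HasEigenvector (cauchyGreen T) μ x) :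
    0 < μ := by
  have hx : 0 < ‖x‖ ^ 2 := by positivity [h.2]
  have hTx : 0 < ‖T x‖ ^ 2 := by
    have : T x ≠ 0 := fun h0 => h.2 (hT (h0.trans T.map_zero.symm))
    positivity
  have : μ * ‖x‖ ^ 2 = ‖T x‖ ^ 2 := by
    rw [← inner_cauchyGreen_apply, h.apply_eq_smul, real_inner_smul_right,
      real_inner_self_eq_norm_sq]
  nlinarith

theorem adjoint_symm_apply_of_hasEigenvector (T : E ≃ₗ[ℝ] F) {μ : ℝ} {x : E}
    (h : HasEigenvector (cauchyGreen (T : E →ₗ[ℝ] F)) μ x) :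
    adjoint (T.symm : F →ₗ[ℝ] E) x = μ⁻¹ • T x := by
  have hμ : μ ≠ 0 := (h.pos_of_cauchyGreen T.injective).ne'
  have hinv : adjoint (T.symm : F →ₗ[ℝ] E) (adjoint (T : E →ₗ[ℝ] F) (T x)) = T x := by
    rw [← LinearMap.comp_apply, ← adjoint_comp, T.comp_symm, adjoint_id, LinearMap.id_apply]
  calc adjoint (T.symm : F →ₗ[ℝ] E) x = μ⁻¹ • adjoint (T.symm : F →ₗ[ℝ] E) (μ • x) := by
        rw [map_smul, inv_smul_smul₀ hμ]
    _ = μ⁻¹ • T x := by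
        rw [← h.apply_eq_smul, cauchyGreen, LinearMap.comp_apply, LinearEquiv.coe_coe, hinv]

theorem Module.End.HasEigenvector.cauchyGreen_symm (T : E ≃ₗ[ℝ] F) {μ : ℝ} {x : E}
    (h : HasEigenvector (cauchyGreen (T : E →ₗ[ℝ] F)) μ x) :
    HasEigenvector (cauchyGreen (T.symm : F →ₗ[ℝ] E)) μ⁻¹ (T x) := by
  refine hasEigenvector_iff.2 ⟨mem_eigenspace_iff.2 ?_, T.map_ne_zero_iff.2 h.2⟩
  rw [cauchyGreen, LinearMap.comp_apply, LinearEquiv.coe_coe, T.symm_apply_apply,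
    adjoint_symm_apply_of_hasEigenvector T h]

theorem inv_mem_spectrum_cauchyGreen_symm (T : E ≃ₗ[ℝ] F) {μ : ℝ}
    (h : μ ∈ spectrum ℝ (cauchyGreen (T : E →ₗ[ℝ] F))) :
    μ⁻¹ ∈ spectrum ℝ (cauchyGreen (T.symm : F →ₗ[ℝ] E)) := by
  obtain ⟨x, hx⟩ := (hasEigenvalue_iff_mem_spectrum.2 h).exists_hasEigenvector
  exact (hasEigenvalue_of_hasEigenvector (hx.cauchyGreen_symm T)).mem_spectrum

theorem isGreatest_spectrum_cauchyGreen_symm (T : E ≃ₗ[ℝ] F) {μ : ℝ}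
    (h : IsLeast (spectrum ℝ (cauchyGreen (T : E →ₗ[ℝ] F))) μ) :
    IsGreatest (spectrum ℝ (cauchyGreen (T.symm : F →ₗ[ℝ] E))) μ⁻¹ := by
  refine ⟨inv_mem_spectrum_cauchyGreen_symm T h.1, fun ν hν => ?_⟩
  have hμ : 0 < μ := by
    obtain ⟨x, hx⟩ := (hasEigenvalue_iff_mem_spectrum.2 h.1).exists_hasEigenvector
    exact hx.pos_of_cauchyGreen T.injective
  have hν : μ ≤ ν⁻¹ := h.2 (by simpa using inv_mem_spectrum_cauchyGreen_symm T.symm hν)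
  exact (le_inv_comm₀ hμ (inv_pos.1 (hμ.trans_le hν))).1 hν

theorem map_orthogonal_span_singleton_of_hasEigenvector (T : E ≃ₗ[ℝ] F) {μ : ℝ} {x : E}
    (h : HasEigenvector (cauchyGreen (T : E →ₗ[ℝ] F)) μ x) :
    (ℝ ∙ x)ᗮ.map (T : E →ₗ[ℝ] F) = (ℝ ∙ T x)ᗮ := by
  have hμ : μ⁻¹ ≠ 0 := inv_ne_zero (h.pos_of_cauchyGreen T.injective).ne'
  rw [Submodule.map_equiv_eq_comap_symm, Submodule.comap_orthogonal_span_singleton,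
    adjoint_symm_apply_of_hasEigenvector T h, Submodule.span_singleton_smul_eq hμ.isUnit]

end CauchyGreen

theorem Matrix.toEuclideanLin_transpose_mul_self {m n : Type*} [Fintype m] [DecidableEq m]
    [Fintype n] [DecidableEq n] (A : Matrix m n ℝ) :
    toEuclideanLin (Aᵀ * A) = cauchyGreen (toEuclideanLin A) := by
  rw [toLpLin_mul_same, ← conjTranspose_eq_transpose_of_trivial,
    toEuclideanLin_conjTranspose_eq_adjoint]
  rfl

/-- Pointwise tangent-space version of Theorem 1(ii): if `ξ ≠ 0` is an eigenvector of the
forward Cauchy–Green tensor `Cᶠ = Aᵀ * A` for its smallest eigenvalue `lmin`, then there is a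
nonzero eigenvector `η` of the backward Cauchy–Green tensor `Cᵇ = (A⁻¹)ᵀ * A⁻¹` for its
largest eigenvalue such that `A ((span ξ)ᗮ) = (span η)ᗮ`. -/
theorem forward_stretch_surface_is_backward_strain_surface
    (n : ℕ) (A : Matrix (Fin n) (Fin n) ℝ) (hA : IsUnit A.det)
    (lmin : ℝ) (hmin : IsLeast (spectrum ℝ (Aᵀ * A)) lmin)
    (ξ : EuclideanSpace ℝ (Fin n)) (hξ0 : ξ ≠ 0)
    (hξ : Matrix.toEuclideanLin (Aᵀ * A) ξ = lmin • ξ) :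
    ∃ (lmax : ℝ) (η : EuclideanSpace ℝ (Fin n)),
      IsGreatest (spectrum ℝ ((A⁻¹)ᵀ * A⁻¹)) lmax ∧ η ≠ 0 ∧
      Matrix.toEuclideanLin ((A⁻¹)ᵀ * A⁻¹) η = lmax • η ∧
      Submodule.map (Matrix.toEuclideanLin A) ((ℝ ∙ ξ)ᗮ) = (ℝ ∙ η)ᗮ := by
  let T : EuclideanSpace ℝ (Fin n) ≃ₗ[ℝ] EuclideanSpace ℝ (Fin n) :=
    .ofLinearMap (toEuclideanLin A) (toEuclideanLin A⁻¹)
      (by rw [← toLpLin_mul_same, mul_nonsing_inv A hA, toLpLin_one])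
      (by rw [← toLpLin_mul_same, nonsing_inv_mul A hA, toLpLin_one])
  have hCf : toEuclideanLin (Aᵀ * A) = cauchyGreen T.toLinearMap := by
    rw [LinearEquiv.toLinearMap_ofLinearMap, toEuclideanLin_transpose_mul_self]
  have hCb : toEuclideanLin ((A⁻¹)ᵀ * A⁻¹) = cauchyGreen T.symm.toLinearMap := by
    rw [LinearEquiv.symm_ofLinearMap, LinearEquiv.toLinearMap_ofLinearMap,
      toEuclideanLin_transpose_mul_self]
  rw [← spectrum_toLpLin 2, hCf] at hmin
  have hξ' : HasEigenvector (cauchyGreen T.toLinearMap) lmin ξ :=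
    hasEigenvector_iff.2 ⟨mem_eigenspace_iff.2 (hCf ▸ hξ), hξ0⟩
  have hη := hξ'.cauchyGreen_symm T
  refine ⟨lmin⁻¹, T ξ, ?_, hη.2, hCb ▸ hη.apply_eq_smul,
    map_orthogonal_span_singleton_of_hasEigenvector T hξ'⟩
  rw [← spectrum_toLpLin 2, hCb]
  exact isGreatest_spectrum_cauchyGreen_symm T hmin
end

section
/- Let A be an invertible n×n real matrix and let η ∈ ℝⁿ be a nonzero eigenvector of the backward Cauchy–Green tensor C^b = (A⁻¹)ᵀ A⁻¹ corresponding to its smallest eigenvalue. Then there exists a nonzero eigenvector ξ of the forward Cauchy–Green tensor C^f = Aᵀ A corresponding to its largest eigenvalue such that A⁻¹((span η)^⊥) = (span ξ)^⊥. (Converse direction of Theorem 1(i): a backward stretch-surface is a forward strain-surface.) -/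
open Matrix
open scoped RealInnerProductSpace

section aux

variable {n : ℕ}

private lemma tEL_mul (M N : Matrix (Fin n) (Fin n) ℝ) (x : EuclideanSpace ℝ (Fin n)) :
    Matrix.toEuclideanLin (M * N) x = Matrix.toEuclideanLin M (Matrix.toEuclideanLin N x) := by
  simp [Matrix.toEuclideanLin_apply, Matrix.mulVec_mulVec]

private lemma tEL_one (x : EuclideanSpace ℝ (Fin n)) :
    Matrix.toEuclideanLin (1 : Matrix (Fin n) (Fin n) ℝ) x = x := by
  simp [Matrix.toEuclideanLin_apply]

private lemma tEL_adj (M : Matrix (Fin n) (Fin n) ℝ) (x y : EuclideanSpace ℝ (Fin n)) :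
    ⟪Matrix.toEuclideanLin Mᵀ x, y⟫ = ⟪x, Matrix.toEuclideanLin M y⟫ := by
  rw [← Matrix.conjTranspose_eq_transpose_of_trivial,
    Matrix.toEuclideanLin_conjTranspose_eq_adjoint, LinearMap.adjoint_inner_left]

private lemma inner_self_pos' {x : EuclideanSpace ℝ (Fin n)} (hx : x ≠ 0) : 0 < ⟪x, x⟫ := by
  rw [real_inner_self_eq_norm_mul_norm]
  exact mul_pos (norm_pos_iff.2 hx) (norm_pos_iff.2 hx)

private lemma spectrum_tEL (M : Matrix (Fin n) (Fin n) ℝ) :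
    spectrum ℝ M = spectrum ℝ (Matrix.toEuclideanLin M) := by
  have h : (Matrix.toEuclideanLin M : EuclideanSpace ℝ (Fin n) →ₗ[ℝ] EuclideanSpace ℝ (Fin n))
      = Matrix.toLinAlgEquiv (PiLp.basisFun 2 ℝ (Fin n)) M := by
    rw [Matrix.toEuclideanLin_eq_toLin (m := Fin n) (n := Fin n) (𝕜 := ℝ)]
    rfl
  rw [h, AlgEquiv.spectrum_eq (Matrix.toLinAlgEquiv (PiLp.basisFun 2 ℝ (Fin n))) M]

private lemma mem_spectrum_iff_eigen (M : Matrix (Fin n) (Fin n) ℝ) (μ : ℝ) :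
    μ ∈ spectrum ℝ M ↔ ∃ v : EuclideanSpace ℝ (Fin n), v ≠ 0 ∧
      Matrix.toEuclideanLin M v = μ • v := by
  rw [spectrum_tEL, ← Module.End.hasEigenvalue_iff_mem_spectrum]
  constructor
  · intro h
    obtain ⟨v, hv⟩ := h.exists_hasEigenvector
    exact ⟨v, hv.right, hv.apply_eq_smul⟩
  · rintro ⟨v, hv0, hv⟩
    exact Module.End.hasEigenvalue_of_hasEigenvector
      ⟨Module.End.mem_eigenspace_iff.2 hv, hv0⟩

end aux

/-- Converse direction of Theorem 1(i): if `η ≠ 0` is an eigenvector of the backward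
Cauchy–Green tensor `Cᵇ = (A⁻¹)ᵀ * A⁻¹` for its smallest eigenvalue, then there is a nonzero
eigenvector `ξ` of the forward Cauchy–Green tensor `Cᶠ = Aᵀ * A` for its largest eigenvalue
such that `A⁻¹ ((span η)ᗮ) = (span ξ)ᗮ`. -/
theorem backward_stretch_surface_is_forward_strain_surface
    (n : ℕ) (A : Matrix (Fin n) (Fin n) ℝ) (hA : IsUnit A.det)
    (lmin : ℝ) (hmin : IsLeast (spectrum ℝ ((A⁻¹)ᵀ * A⁻¹)) lmin)
    (η : EuclideanSpace ℝ (Fin n)) (hη0 : η ≠ 0)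
    (hη : Matrix.toEuclideanLin ((A⁻¹)ᵀ * A⁻¹) η = lmin • η) :
    ∃ (lmax : ℝ) (ξ : EuclideanSpace ℝ (Fin n)),
      IsGreatest (spectrum ℝ (Aᵀ * A)) lmax ∧ ξ ≠ 0 ∧
      Matrix.toEuclideanLin (Aᵀ * A) ξ = lmax • ξ ∧
      Submodule.map (Matrix.toEuclideanLin A⁻¹) ((ℝ ∙ η)ᗮ) = (ℝ ∙ ξ)ᗮ := by
  have hmulinv : A * A⁻¹ = 1 := Matrix.mul_nonsing_inv A hA
  have hinvmul : A⁻¹ * A = 1 := Matrix.nonsing_inv_mul A hA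
  set T : Matrix (Fin n) (Fin n) ℝ → EuclideanSpace ℝ (Fin n) →ₗ[ℝ] EuclideanSpace ℝ (Fin n) :=
    fun M => Matrix.toEuclideanLin M with hT
  set ξ : EuclideanSpace ℝ (Fin n) := T A⁻¹ η with hξ
  -- basic identities
  have hAξ : T A ξ = η := by
    rw [hξ, ← tEL_mul, hmulinv, tEL_one]
  have hξ0 : ξ ≠ 0 := by
    intro h
    apply hη0
    rw [← hAξ, h, map_zero]
  -- from the eigen-equation: T (A⁻¹)ᵀ ξ = lmin • η
  have hCb : T (A⁻¹)ᵀ ξ = lmin • η := by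
    rw [hξ, ← tEL_mul]; exact hη
  -- lmin > 0
  have hlmin_pos : 0 < lmin := by
    have h1 : ⟪T (A⁻¹)ᵀ ξ, η⟫ = ⟪ξ, ξ⟫ := by
      rw [tEL_adj]
    rw [hCb, real_inner_smul_left] at h1
    have hξξ : 0 < ⟪ξ, ξ⟫ := inner_self_pos' hξ0
    have hηη : 0 < ⟪η, η⟫ := inner_self_pos' hη0
    nlinarith
  have hlmin_ne : lmin ≠ 0 := ne_of_gt hlmin_pos
  -- T Aᵀ η = lmin⁻¹ • ξ
  have hAtη : T Aᵀ η = lmin⁻¹ • ξ := by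
    have := congrArg (T Aᵀ) hCb
    rw [← tEL_mul, ← Matrix.transpose_mul, hinvmul, Matrix.transpose_one, tEL_one,
      LinearMap.map_smul] at this
    rw [this, smul_smul, inv_mul_cancel₀ hlmin_ne, one_smul]
  -- eigen-equation for AᵀA
  have hCf : T (Aᵀ * A) ξ = lmin⁻¹ • ξ := by
    rw [tEL_mul, hAξ]; exact hAtη
  refine ⟨lmin⁻¹, ξ, ⟨?_, ?_⟩, hξ0, hCf, ?_⟩
  · exact (mem_spectrum_iff_eigen _ _).2 ⟨ξ, hξ0, hCf⟩
  · -- upper bound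
    intro μ hμ
    obtain ⟨v, hv0, hv⟩ := (mem_spectrum_iff_eigen _ _).1 hμ
    have hAv0 : T A v ≠ 0 := by
      intro h
      apply hv0
      have := congrArg (T A⁻¹) h
      rw [← tEL_mul, hinvmul, tEL_one, map_zero] at this
      exact this
    -- μ > 0
    have hμpos : 0 < μ := by
      have h1 : ⟪T (Aᵀ * A) v, v⟫ = ⟪T A v, T A v⟫ := by
        rw [tEL_mul, tEL_adj]
      rw [hv, real_inner_smul_left] at h1
      have h2 : 0 < ⟪T A v, T A v⟫ := inner_self_pos' hAv0
      have h3 : 0 < ⟪v, v⟫ := inner_self_pos' hv0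
      nlinarith
    -- w := A v is eigenvector of Cᵇ with μ⁻¹
    have hinvAt : T (A⁻¹)ᵀ v = μ⁻¹ • T A v := by
      have := congrArg (T (A⁻¹)ᵀ) (by rw [tEL_mul] at hv; exact hv :
        T Aᵀ (T A v) = μ • v)
      rw [← tEL_mul, ← Matrix.transpose_mul, hmulinv, Matrix.transpose_one, tEL_one,
        LinearMap.map_smul] at this
      rw [this, smul_smul, inv_mul_cancel₀ (ne_of_gt hμpos), one_smul]
    have hAinvAv : Matrix.toEuclideanLin A⁻¹ (T A v) = v := by
      rw [← tEL_mul, hinvmul, tEL_one]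
    have hw : T ((A⁻¹)ᵀ * A⁻¹) (T A v) = μ⁻¹ • T A v := by
      rw [tEL_mul, hAinvAv]
      exact hinvAt
    have hμinv_mem : μ⁻¹ ∈ spectrum ℝ ((A⁻¹)ᵀ * A⁻¹) :=
      (mem_spectrum_iff_eigen _ _).2 ⟨T A v, hAv0, hw⟩
    have hle : lmin ≤ μ⁻¹ := hmin.2 hμinv_mem
    have : μ * lmin ≤ 1 := by
      have := mul_le_mul_of_nonneg_left hle (le_of_lt hμpos)
      rwa [mul_inv_cancel₀ (ne_of_gt hμpos)] at this
    nlinarith [mul_inv_cancel₀ hlmin_ne, inv_pos.2 hlmin_pos, this]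
  · -- the subspace equality
    ext y
    simp only [Submodule.mem_map]
    constructor
    · rintro ⟨x, hx, rfl⟩
      rw [Submodule.mem_orthogonal_singleton_iff_inner_right]
      rw [Submodule.mem_orthogonal_singleton_iff_inner_right] at hx
      have : ⟪T (A⁻¹)ᵀ ξ, x⟫ = ⟪ξ, T A⁻¹ x⟫ := tEL_adj _ _ _
      rw [hCb, real_inner_smul_left, hx, mul_zero] at this
      exact this.symm
    · intro hy
      rw [Submodule.mem_orthogonal_singleton_iff_inner_right] at hy
      refine ⟨T A y, ?_, ?_⟩
      · rw [Submodule.mem_orthogonal_singleton_iff_inner_right]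
        have : ⟪T Aᵀ η, y⟫ = ⟪η, T A y⟫ := tEL_adj _ _ _
        rw [hAtη, real_inner_smul_left, hy, mul_zero] at this
        exact this.symm
      · rw [← tEL_mul, hinvmul, tEL_one]
end

section
/- Let U ⊆ ℝⁿ be open, let F : U → ℝⁿ be continuously differentiable with derivative DF, and for x ∈ U set C(x) = (DF(x))ᵀ DF(x). Let r : [0, L] → U be a continuously differentiable curve with |r'(s)| = 1 for all s, and suppose there is a function λ : [0, L] → ℝ with λ(s) ≥ 0 such that C(r(s)) r'(s) = λ(s) r'(s) for all s (the curve is everywhere tangent to an eigenvector of C). Then the length of F ∘ r equals ∫₀ᴸ √(λ(s)) ds. -/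
open Matrix
open scoped RealInnerProductSpace

lemma norm_toEuclideanLin_apply_of_eig {n : ℕ} (M : Matrix (Fin n) (Fin n) ℝ)
    (v : EuclideanSpace ℝ (Fin n)) (lam : ℝ) (hlam : 0 ≤ lam) (hv : ‖v‖ = 1)
    (h : Matrix.toEuclideanLin (Mᵀ * M) v = lam • v) :
    ‖Matrix.toEuclideanLin M v‖ = Real.sqrt lam := by
  have hT : (Mᵀ : Matrix (Fin n) (Fin n) ℝ) = Mᴴ := by
    ext i j; simp [Matrix.conjTranspose_apply, Matrix.transpose_apply]
  have hmul : Matrix.toEuclideanLin (Mᵀ * M) v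
      = Matrix.toEuclideanLin Mᵀ (Matrix.toEuclideanLin M v) := by
    simp [Matrix.toEuclideanLin_apply, Matrix.mulVec_mulVec]
  have hadj : Matrix.toEuclideanLin Mᵀ (Matrix.toEuclideanLin M v)
      = LinearMap.adjoint (Matrix.toEuclideanLin M) (Matrix.toEuclideanLin M v) := by
    rw [hT, Matrix.toEuclideanLin_conjTranspose_eq_adjoint]
  have key : ‖Matrix.toEuclideanLin M v‖ ^ 2 = lam := by
    have := LinearMap.adjoint_inner_left (Matrix.toEuclideanLin M)
      v (Matrix.toEuclideanLin M v)
    rw [← hadj, ← hmul, h] at this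
    have hvv : ⟪lam • v, v⟫ = lam := by
      rw [real_inner_smul_left, real_inner_self_eq_norm_sq, hv]; ring
    rw [hvv] at this
    rw [← real_inner_self_eq_norm_sq, real_inner_comm, this]
  rw [← key, Real.sqrt_sq (norm_nonneg _)]

/-- If `F` is continuously differentiable on an open set `U` with (matrix) derivative `DF`,
`C x = (DF x)ᵀ * DF x`, and `r : [0, L] → U` is a unit-speed `C¹` curve that is everywhere
tangent to an eigenvector of `C` with (nonnegative) eigenvalue `lam s`, then the length of
`F ∘ r` equals `∫₀ᴸ √(lam s) ds`. -/
theorem length_of_image_of_eigenvector_curve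
    (n : ℕ) (U : Set (EuclideanSpace ℝ (Fin n))) (hU : IsOpen U)
    (F : EuclideanSpace ℝ (Fin n) → EuclideanSpace ℝ (Fin n))
    (DF : EuclideanSpace ℝ (Fin n) → Matrix (Fin n) (Fin n) ℝ)
    (hF : ∀ x ∈ U, HasFDerivAt F
      (LinearMap.toContinuousLinearMap (Matrix.toEuclideanLin (DF x))) x)
    (hDF : ContinuousOn DF U)
    (L : ℝ) (hL : 0 ≤ L)
    (r r' : ℝ → EuclideanSpace ℝ (Fin n))
    (hrU : ∀ s ∈ Set.Icc (0 : ℝ) L, r s ∈ U)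
    (hr : ∀ s ∈ Set.Icc (0 : ℝ) L, HasDerivAt r (r' s) s)
    (hr' : ContinuousOn r' (Set.Icc (0 : ℝ) L))
    (hunit : ∀ s ∈ Set.Icc (0 : ℝ) L, ‖r' s‖ = 1)
    (lam : ℝ → ℝ) (hlam : ∀ s ∈ Set.Icc (0 : ℝ) L, 0 ≤ lam s)
    (heig : ∀ s ∈ Set.Icc (0 : ℝ) L,
      Matrix.toEuclideanLin ((DF (r s))ᵀ * DF (r s)) (r' s) = lam s • r' s) :
    ∫ s in (0 : ℝ)..L, ‖deriv (F ∘ r) s‖ =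
      ∫ s in (0 : ℝ)..L, Real.sqrt (lam s) := by
  apply intervalIntegral.integral_congr
  intro s hs
  rw [Set.uIcc_of_le hL] at hs
  show ‖deriv (F ∘ r) s‖ = Real.sqrt (lam s)
  have hd : HasDerivAt (F ∘ r)
      (Matrix.toEuclideanLin (DF (r s)) (r' s)) s := by
    have := (hF (r s) (hrU s hs)).comp_hasDerivAt s (hr s hs)
    simpa using this
  rw [hd.deriv]
  exact norm_toEuclideanLin_apply_of_eig _ _ _ (hlam s hs) (hunit s hs) (heig s hs)
end

section
/- Let U ⊆ ℝⁿ be open, let F : U → ℝⁿ be continuously differentiable with derivative DF, and for x ∈ U set C(x) = (DF(x))ᵀ DF(x). Let r : [0, L] → U (L > 0) be continuously differentiable with |r'(s)| = 1 for all s, and suppose C(r(s)) r'(s) = λ(s) r'(s) for some λ : [0, L] → ℝ with λ(s) ≥ 0. Then the relative stretching q = ℓ(F ∘ r) / ℓ(r) of the curve satisfies q = (1/L) ∫₀ᴸ √(λ(s)) ds. -/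
open Matrix
open scoped RealInnerProductSpace

lemma key_inner (n : ℕ) (A : Matrix (Fin n) (Fin n) ℝ) (v : EuclideanSpace ℝ (Fin n)) :
    ⟪Matrix.toEuclideanLin (Aᵀ * A) v, v⟫ = ‖Matrix.toEuclideanLin A v‖ ^ 2 := by
  have hct : Aᵀ = Aᴴ := by ext i j; simp [Matrix.conjTranspose_apply]
  have hmul : Matrix.toEuclideanLin (Aᵀ * A) v =
      Matrix.toEuclideanLin Aᵀ (Matrix.toEuclideanLin A v) := by
    simp [Matrix.toEuclideanLin_apply, Matrix.mulVec_mulVec]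
  rw [hmul, hct, Matrix.toEuclideanLin_conjTranspose_eq_adjoint,
    LinearMap.adjoint_inner_left, real_inner_self_eq_norm_sq]

/-- If `F` is continuously differentiable on an open set `U` with (matrix) derivative `DF`,
`C x = (DF x)ᵀ * DF x`, and `r : [0, L] → U` (with `L > 0`) is a unit-speed `C¹` curve that is
everywhere tangent to an eigenvector of `C` with nonnegative eigenvalue `lam s`, then the
relative stretching `q = ℓ(F ∘ r) / ℓ(r)` equals `(1 / L) ∫₀ᴸ √(lam s) ds`. -/
theorem relative_stretching_of_stretchline
    (n : ℕ) (U : Set (EuclideanSpace ℝ (Fin n))) (hU : IsOpen U)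
    (F : EuclideanSpace ℝ (Fin n) → EuclideanSpace ℝ (Fin n))
    (DF : EuclideanSpace ℝ (Fin n) → Matrix (Fin n) (Fin n) ℝ)
    (hF : ∀ x ∈ U, HasFDerivAt F
      (LinearMap.toContinuousLinearMap (Matrix.toEuclideanLin (DF x))) x)
    (hDF : ContinuousOn DF U)
    (L : ℝ) (hL : 0 < L)
    (r r' : ℝ → EuclideanSpace ℝ (Fin n))
    (hrU : ∀ s ∈ Set.Icc (0 : ℝ) L, r s ∈ U)
    (hr : ∀ s ∈ Set.Icc (0 : ℝ) L, HasDerivAt r (r' s) s)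
    (hr' : ContinuousOn r' (Set.Icc (0 : ℝ) L))
    (hunit : ∀ s ∈ Set.Icc (0 : ℝ) L, ‖r' s‖ = 1)
    (lam : ℝ → ℝ) (hlam : ∀ s ∈ Set.Icc (0 : ℝ) L, 0 ≤ lam s)
    (heig : ∀ s ∈ Set.Icc (0 : ℝ) L,
      Matrix.toEuclideanLin ((DF (r s))ᵀ * DF (r s)) (r' s) = lam s • r' s) :
    (∫ s in (0 : ℝ)..L, ‖deriv (F ∘ r) s‖) / (∫ s in (0 : ℝ)..L, ‖r' s‖) =
      (1 / L) * ∫ s in (0 : ℝ)..L, Real.sqrt (lam s) := by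
  have hIcc : Set.uIcc (0:ℝ) L = Set.Icc 0 L := Set.uIcc_of_le hL.le
  have hderiv : ∀ s ∈ Set.Icc (0:ℝ) L, ‖deriv (F ∘ r) s‖ = Real.sqrt (lam s) := by
    intro s hs
    have hd : HasDerivAt (F ∘ r)
        ((LinearMap.toContinuousLinearMap (Matrix.toEuclideanLin (DF (r s)))) (r' s)) s :=
      (hF (r s) (hrU s hs)).comp_hasDerivAt s (hr s hs)
    have hde : deriv (F ∘ r) s = Matrix.toEuclideanLin (DF (r s)) (r' s) := hd.deriv
    have hsq : ‖Matrix.toEuclideanLin (DF (r s)) (r' s)‖ ^ 2 = lam s := by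
      rw [← key_inner, heig s hs, real_inner_smul_left, real_inner_self_eq_norm_sq,
        hunit s hs]
      ring
    rw [hde, ← hsq, Real.sqrt_sq (norm_nonneg _)]
  have h1 : ∫ s in (0:ℝ)..L, ‖deriv (F ∘ r) s‖ = ∫ s in (0:ℝ)..L, Real.sqrt (lam s) := by
    apply intervalIntegral.integral_congr
    intro s hs; rw [hIcc] at hs; exact hderiv s hs
  have h2 : ∫ s in (0:ℝ)..L, ‖r' s‖ = L := by
    rw [intervalIntegral.integral_congr (g := fun _ => (1:ℝ))
      (by intro s hs; rw [hIcc] at hs; exact hunit s hs)]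
    simp
  rw [h1, h2, div_eq_mul_inv, one_div, mul_comm]
end
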